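/- (λ-weighted performance difference lemma) For any policy π, any λ ∈ [0,1), and any baseline value function f: S→ℝ with f = 0 at terminal states, V^π(d_0) − f(d_0) = (1−λ)·T·E_{s∼d^π}[A^{f,π}_λ(s,π)] + λ·E_{s∼d_0}[A^{f,π}_λ(s,π)], where A^{f,π}_λ(s,a) = (1−λ)·Σ_{i=0}^∞ λ^i A^{f,π}_{(i)}(s,a). -/

import Mathlib

open Finset

/-- A finite-horizon Markov decision process with transition kernel `P` and reward `r`.
Time-dependence (nonstationarity) is handled by indexing functions by the time step. -/
structure MDP (S A : Type) where
  P : S → A → S → ℝ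
  r : S → A → ℝ

variable {S A : Type} [Fintype S] [DecidableEq S] [Fintype A]

/-- Expectation of `g` under the (sub)distribution `d`. -/
def expect (d : S → ℝ) (g : S → ℝ) : ℝ := ∑ s, d s * g s

/-- `n`-step value function of a (stationary) stochastic policy `π`. -/
def MDP.val (M : MDP S A) (π : S → A → ℝ) : ℕ → S → ℝ
  | 0, _ => 0
  | n + 1, s => ∑ a, π s a * (M.r s a + ∑ s', M.P s a s' * M.val π n s')

/-- State distribution at time `t` obtained by running `π` from `d0`. -/
def MDP.stateDist (M : MDP S A) (π : S → A → ℝ) (d0 : S → ℝ) : ℕ → S → ℝ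
  | 0 => d0
  | t + 1 => fun s' => ∑ s, ∑ a, M.stateDist π d0 t s * π s a * M.P s a s'

/-- One-step advantage `A^f(s,a)` of a time-indexed baseline value function `f` at time `t`. -/
def MDP.advStep (M : MDP S A) (f : ℕ → S → ℝ) (t : ℕ) (s : S) (a : A) : ℝ :=
  M.r s a + ∑ s', M.P s a s' * f (t + 1) s' - f t s

/-- `A^f(s,π) = E_{a∼π(·|s)}[A^f(s,a)]`. -/
def MDP.advStepPi (M : MDP S A) (f : ℕ → S → ℝ) (π : S → A → ℝ) (t : ℕ) (s : S) : ℝ :=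
  ∑ a, π s a * M.advStep f t s a

/-- Distribution over states reached from `s` after `n` steps of `π`. -/
def MDP.push (M : MDP S A) (π : S → A → ℝ) : ℕ → S → S → ℝ
  | 0, s => fun s' => if s' = s then 1 else 0
  | n + 1, s => fun s'' => ∑ a, π s a * ∑ s', M.P s a s' * M.push π n s' s''

/-- `i`-step advantage `A^{f,π}_{(i)}(s_t, π)` (action marginalized) for horizon `T`:
rewards from `t` for `min (i+1) (T-t)` steps plus `f` at the reached state, minus `f t s`.
Rewards and `f` are zero beyond the horizon, encoded by clipping at `T - t`. -/
def MDP.advI (M : MDP S A) (T : ℕ) (f : ℕ → S → ℝ) (π : S → A → ℝ) (t i : ℕ) (s : S) : ℝ :=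
  M.val π (min (i + 1) (T - t)) s
    + expect (M.push π (min (i + 1) (T - t)) s) (f (t + min (i + 1) (T - t))) - f t s

/-- `i`-step advantage `A^{f,π}_{(i)}(s_t, a_t)` (action version) for horizon `T`. -/
def MDP.advIA (M : MDP S A) (T : ℕ) (f : ℕ → S → ℝ) (π : S → A → ℝ) (t i : ℕ) (s : S) (a : A) : ℝ :=
  M.r s a + ∑ s', M.P s a s' *
      (M.val π (min i (T - t - 1)) s'
        + expect (M.push π (min i (T - t - 1)) s') (f (t + 1 + min i (T - t - 1))))
    - f t s

/-- λ-weighted advantage `A^{f,π}_λ(s,a) = (1-λ)Σ_{i≥0} λ^i A^{f,π}_{(i)}(s,a)`, written in the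
equivalent closed form using that `A_{(i)}` stabilizes for `i ≥ T - t - 1` (this form is also
valid at `λ = 1`, where it is the limit `Q^π - f`, and at `λ = 0` with `0^0 = 1`). -/
def MDP.advL (M : MDP S A) (T : ℕ) (f : ℕ → S → ℝ) (π : S → A → ℝ) (lam : ℝ)
    (t : ℕ) (s : S) (a : A) : ℝ :=
  (1 - lam) * ∑ i ∈ Finset.range (T - t - 1), lam ^ i * M.advIA T f π t i s a
    + lam ^ (T - t - 1) * M.advIA T f π t (T - t - 1) s a

/-- `A^{f,π}_λ(s,π)`. -/
def MDP.advLPi (M : MDP S A) (T : ℕ) (f : ℕ → S → ℝ) (π : S → A → ℝ) (lam : ℝ)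
    (t : ℕ) (s : S) : ℝ :=
  ∑ a, π s a * M.advL T f π lam t s a

/-- `n`-step value of a deterministic, nonstationary policy `πm` starting at time `t`. -/
def MDP.valD (M : MDP S A) (πm : ℕ → S → A) : ℕ → ℕ → S → ℝ
  | _, 0, _ => 0
  | t, n + 1, s => M.r s (πm t s) + ∑ s', M.P s (πm t s) s' * M.valD πm (t + 1) n s'

/-- Distribution over states reached from `s` at time `t` after `n` steps of the deterministic
nonstationary policy `πm`. -/
def MDP.pushD (M : MDP S A) (πm : ℕ → S → A) : ℕ → ℕ → S → S → ℝ
  | _, 0, s => fun s' => if s' = s then 1 else 0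
  | t, n + 1, s => fun s'' => ∑ s', M.P s (πm t s) s' * M.pushD πm (t + 1) n s' s''


set_option linter.unusedSectionVars false

section Helpers

variable (M : MDP S A) (π : S → A → ℝ) (d0 : S → ℝ) (f : ℕ → S → ℝ)

lemma expect_const_mul (d : S → ℝ) (c : ℝ) (g : S → ℝ) :
    expect d (fun s => c * g s) = c * expect d g := by
  simp only [_root_.expect, Finset.mul_sum]
  exact Finset.sum_congr rfl fun s _ => by ring

lemma expect_add' (d : S → ℝ) (g h : S → ℝ) :
    expect d (fun s => g s + h s) = expect d g + expect d h := by
  simp [_root_.expect, mul_add, Finset.sum_add_distrib]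

lemma expect_sub' (d : S → ℝ) (g h : S → ℝ) :
    expect d (fun s => g s - h s) = expect d g - expect d h := by
  simp [_root_.expect, mul_sub, Finset.sum_sub_distrib]

lemma expect_finsum (d : S → ℝ) (n : ℕ) (g : ℕ → S → ℝ) :
    expect d (fun s => ∑ i ∈ range n, g i s) = ∑ i ∈ range n, expect d (g i) := by
  simp only [_root_.expect, Finset.mul_sum]
  exact Finset.sum_comm

lemma expect_delta (s : S) (g : S → ℝ) :
    expect (fun s' => if s' = s then (1 : ℝ) else 0) g = g s := by
  simp [_root_.expect, ite_mul]

lemma step_expect (t : ℕ) (g : S → ℝ) :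
    expect (M.stateDist π d0 (t + 1)) g
      = expect (M.stateDist π d0 t) (fun s => ∑ a, π s a * ∑ s', M.P s a s' * g s') := by
  simp only [_root_.expect, MDP.stateDist, Finset.sum_mul, Finset.mul_sum]
  rw [Finset.sum_comm]
  refine Finset.sum_congr rfl fun s _ => ?_
  rw [Finset.sum_comm]
  exact Finset.sum_congr rfl fun a _ => Finset.sum_congr rfl fun s' _ => by ring

lemma push_succ_expect (n : ℕ) (s : S) (g : S → ℝ) :
    expect (M.push π (n + 1) s) g
      = ∑ a, π s a * ∑ s', M.P s a s' * expect (M.push π n s') g := by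
  simp only [_root_.expect, MDP.push, Finset.sum_mul, Finset.mul_sum]
  rw [Finset.sum_comm]
  refine Finset.sum_congr rfl fun a _ => ?_
  rw [Finset.sum_comm]
  exact Finset.sum_congr rfl fun s' _ => Finset.sum_congr rfl fun s'' _ => by ring

lemma push_expect : ∀ (n t : ℕ) (g : S → ℝ),
    expect (M.stateDist π d0 t) (fun s => expect (M.push π n s) g)
      = expect (M.stateDist π d0 (t + n)) g := by
  intro n
  induction n with
  | zero =>
    intro t g
    simp only [MDP.push, Nat.add_zero]
    exact congrArg (_root_.expect _) (funext fun s => expect_delta s g)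
  | succ n ih =>
    intro t g
    have h1 : (fun s => expect (M.push π (n + 1) s) g)
        = fun s => ∑ a, π s a * ∑ s', M.P s a s' * expect (M.push π n s') g :=
      funext fun s => push_succ_expect M π n s g
    rw [h1, ← step_expect, ih (t + 1) g]
    ring_nf

/-- Expected one-step advantage at time `t` under the state distribution. -/
noncomputable def aSeq (M : MDP S A) (π : S → A → ℝ) (d0 : S → ℝ) (f : ℕ → S → ℝ) (t : ℕ) : ℝ :=
  expect (M.stateDist π d0 t) (M.advStepPi f π t)

lemma aSeq_eq (hπ1 : ∀ s, ∑ a, π s a = 1) (t : ℕ) :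
    aSeq M π d0 f t
      = expect (M.stateDist π d0 t) (fun s => ∑ a, π s a * M.r s a)
        + expect (M.stateDist π d0 (t + 1)) (f (t + 1))
        - expect (M.stateDist π d0 t) (f t) := by
  have h1 : ∀ s, M.advStepPi f π t s
      = (∑ a, π s a * M.r s a) + (∑ a, π s a * ∑ s', M.P s a s' * f (t + 1) s') - f t s := by
    intro s
    have : ∀ a, π s a * M.advStep f t s a
        = π s a * M.r s a + π s a * (∑ s', M.P s a s' * f (t + 1) s') - π s a * f t s := by
      intro a; simp only [MDP.advStep]; ring
    simp only [MDP.advStepPi, this, Finset.sum_sub_distrib, Finset.sum_add_distrib,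
      ← Finset.sum_mul, hπ1 s, one_mul]
  have h2 : M.advStepPi f π t = fun s =>
      ((∑ a, π s a * M.r s a) + (∑ a, π s a * ∑ s', M.P s a s' * f (t + 1) s')) - f t s :=
    funext fun s => by rw [h1 s]
  rw [aSeq, h2, expect_sub', expect_add', ← step_expect]

lemma val_expect (hπ1 : ∀ s, ∑ a, π s a = 1) : ∀ (n t : ℕ),
    expect (M.stateDist π d0 t) (M.val π n)
      = (∑ j ∈ range n, aSeq M π d0 f (t + j))
        + expect (M.stateDist π d0 t) (f t)
        - expect (M.stateDist π d0 (t + n)) (f (t + n)) := by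
  intro n
  induction n with
  | zero => intro t; simp [MDP.val, _root_.expect]
  | succ n ih =>
    intro t
    have hval : M.val π (n + 1) = fun s =>
        (∑ a, π s a * M.r s a) + ∑ a, π s a * ∑ s', M.P s a s' * M.val π n s' := by
      funext s
      simp only [MDP.val, mul_add, Finset.sum_add_distrib]
    rw [hval, expect_add', ← step_expect, ih (t + 1)]
    have hsum : ∑ j ∈ range (n + 1), aSeq M π d0 f (t + j)
        = aSeq M π d0 f t + ∑ j ∈ range n, aSeq M π d0 f (t + 1 + j) := by
      rw [Finset.sum_range_succ']
      simp only [Nat.add_zero]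
      rw [add_comm]
      congr 1
      exact Finset.sum_congr rfl fun j _ => by rw [show t + (j + 1) = t + 1 + j by omega]
    rw [hsum, aSeq_eq M π d0 f hπ1 t,
      show t + (n + 1) = t + 1 + n by omega]
    ring

lemma W_eq (hπ1 : ∀ s, ∑ a, π s a = 1) (T t i : ℕ) :
    expect (M.stateDist π d0 t) (fun s => M.advI T f π t i s)
      = ∑ j ∈ range (min (i + 1) (T - t)), aSeq M π d0 f (t + j) := by
  have h1 : (fun s => M.advI T f π t i s)
      = fun s => (M.val π (min (i + 1) (T - t)) s
          + expect (M.push π (min (i + 1) (T - t)) s) (f (t + min (i + 1) (T - t))))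
          - f t s := funext fun s => by rw [MDP.advI]
  rw [h1, expect_sub', expect_add', push_expect, val_expect M π d0 f hπ1]
  ring

lemma advI_stab (T t : ℕ) (s : S) : ∀ i, T - t - 1 ≤ i →
    M.advI T f π t i s = M.advI T f π t (T - t - 1) s := by
  intro i hi
  have : min (i + 1) (T - t) = min (T - t - 1 + 1) (T - t) := by omega
  rw [MDP.advI, MDP.advI, this]

lemma tsum_geom_stab (lam : ℝ) (h0 : 0 ≤ lam) (h1 : lam < 1) (h : ℕ → ℝ) (N : ℕ)
    (hc : ∀ i, N ≤ i → h i = h N) :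
    ∑' i : ℕ, lam ^ i * h i
      = ∑ i ∈ range N, lam ^ i * h i + lam ^ N * h N * (1 - lam)⁻¹ := by
  have key : ∀ i : ℕ, lam ^ (i + N) * h (i + N) = (lam ^ N * h N) * lam ^ i := by
    intro i
    rw [hc _ (Nat.le_add_left _ _), pow_add]
    ring
  have hs : Summable (fun i : ℕ => lam ^ (i + N) * h (i + N)) := by
    rw [show (fun i : ℕ => lam ^ (i + N) * h (i + N)) = fun i => (lam ^ N * h N) * lam ^ i
      from funext key]
    exact (summable_geometric_of_lt_one h0 h1).mul_left _
  have hsum : Summable (fun i : ℕ => lam ^ i * h i) := (summable_nat_add_iff N).mp hs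
  rw [← Summable.sum_add_tsum_nat_add N hsum]
  congr 1
  rw [tsum_congr key, tsum_mul_left, tsum_geometric_of_lt_one h0 h1]
  try ring

lemma alg_inner' (lam : ℝ) (b : ℕ → ℝ) : ∀ m : ℕ,
    (1 - lam) * ∑ i ∈ range m, lam ^ i * ∑ j ∈ range (i + 1), b j
      + lam ^ m * ∑ j ∈ range (m + 1), b j
    = ∑ j ∈ range (m + 1), lam ^ j * b j := by
  intro m
  induction m with
  | zero => simp
  | succ m ih =>
    rw [Finset.sum_range_succ (fun i => lam ^ i * ∑ j ∈ range (i + 1), b j),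
      Finset.sum_range_succ b (m + 1), Finset.sum_range_succ (fun j => lam ^ j * b j) (m + 1)]
    rw [← ih]
    ring

lemma alg_inner (lam : ℝ) (b : ℕ → ℝ) (K : ℕ) :
    (1 - lam) * ∑ i ∈ range (K - 1), lam ^ i * ∑ j ∈ range (min (i + 1) K), b j
      + lam ^ (K - 1) * ∑ j ∈ range (min (K - 1 + 1) K), b j
    = ∑ j ∈ range K, lam ^ j * b j := by
  match K with
  | 0 => simp
  | (m + 1) =>
    have h1 : ∀ i ∈ range (m + 1 - 1), lam ^ i * ∑ j ∈ range (min (i + 1) (m + 1)), b j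
        = lam ^ i * ∑ j ∈ range (i + 1), b j := by
      intro i hi
      rw [Finset.mem_range] at hi
      rw [show min (i + 1) (m + 1) = i + 1 by omega]
    rw [Finset.sum_congr rfl h1, show min (m + 1 - 1 + 1) (m + 1) = m + 1 by omega,
      show m + 1 - 1 = m from rfl]
    exact alg_inner' lam b m

lemma alg_outer (lam : ℝ) (h1 : lam ≠ 1) (a : ℕ → ℝ) : ∀ T : ℕ,
    (1 - lam) * ∑ t ∈ range T, ∑ j ∈ range (T - t), lam ^ j * a (t + j)
      + lam * ∑ j ∈ range T, lam ^ j * a j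
    = ∑ t ∈ range T, a t := by
  intro T
  induction T with
  | zero => simp
  | succ T ih =>
    have hgeom : (1 - lam) * ∑ k ∈ range T, lam ^ k = 1 - lam ^ T := by
      have := geom_sum_mul lam T
      linear_combination -this
    have hD : ∑ t ∈ range (T + 1), ∑ j ∈ range (T + 1 - t), lam ^ j * a (t + j)
        = (∑ t ∈ range T, ∑ j ∈ range (T - t), lam ^ j * a (t + j))
          + (lam * ∑ k ∈ range T, lam ^ k) * a T + a T := by
      rw [Finset.sum_range_succ]
      have hrow : ∀ t ∈ range T, ∑ j ∈ range (T + 1 - t), lam ^ j * a (t + j)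
          = (∑ j ∈ range (T - t), lam ^ j * a (t + j)) + lam ^ (T - t) * a T := by
        intro t ht
        rw [Finset.mem_range] at ht
        rw [show T + 1 - t = (T - t) + 1 by omega, Finset.sum_range_succ,
          show t + (T - t) = T by omega]
      rw [Finset.sum_congr rfl hrow, Finset.sum_add_distrib, ← Finset.sum_mul]
      have hrefl : ∑ t ∈ range T, lam ^ (T - t) = lam * ∑ k ∈ range T, lam ^ k := by
        have hr := Finset.sum_range_reflect (fun j => lam ^ (j + 1)) T
        calc ∑ t ∈ range T, lam ^ (T - t)
            = ∑ j ∈ range T, lam ^ (T - 1 - j + 1) :=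
              Finset.sum_congr rfl fun t ht => by
                rw [Finset.mem_range] at ht
                rw [show T - 1 - t + 1 = T - t by omega]
          _ = ∑ j ∈ range T, lam ^ (j + 1) := hr
          _ = lam * ∑ k ∈ range T, lam ^ k := by
              rw [Finset.mul_sum]
              exact Finset.sum_congr rfl fun k _ => by rw [pow_succ']
      rw [hrefl, show T + 1 - T = 1 by omega]
      simp
      try ring
    rw [hD, Finset.sum_range_succ (fun j => lam ^ j * a j) T,
      Finset.sum_range_succ a T, ← ih]
    linear_combination (lam * a T) * hgeom


lemma expectF (hπ1 : ∀ s, ∑ a, π s a = 1) (T : ℕ) (lam : ℝ) (h0 : 0 ≤ lam) (h1 : lam < 1)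
    (t : ℕ) :
    expect (M.stateDist π d0 t) (fun s => (1 - lam) * ∑' i : ℕ, lam ^ i * M.advI T f π t i s)
      = ∑ j ∈ range (T - t), lam ^ j * aSeq M π d0 f (t + j) := by
  have hne : (1 : ℝ) - lam ≠ 0 := by
    intro h; rw [sub_eq_zero] at h; exact absurd h.symm (ne_of_lt h1)
  have key : (fun s => (1 - lam) * ∑' i : ℕ, lam ^ i * M.advI T f π t i s)
      = fun s => (1 - lam) * ∑ i ∈ range (T - t - 1), lam ^ i * M.advI T f π t i s
          + lam ^ (T - t - 1) * M.advI T f π t (T - t - 1) s := by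
    funext s
    rw [tsum_geom_stab lam h0 h1 (fun i => M.advI T f π t i s) (T - t - 1)
      (advI_stab M π f T t s)]
    field_simp
  have h2 : ∀ i, expect (M.stateDist π d0 t) (fun s => lam ^ i * M.advI T f π t i s)
      = lam ^ i * ∑ j ∈ range (min (i + 1) (T - t)), aSeq M π d0 f (t + j) := by
    intro i
    rw [expect_const_mul, W_eq M π d0 f hπ1 T t i]
  rw [key, expect_add', expect_const_mul, expect_finsum,
    Finset.sum_congr rfl (fun i _ => h2 i), h2 (T - t - 1)]
  exact alg_inner lam (fun j => aSeq M π d0 f (t + j)) (T - t)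


end Helpers

/-- **λ-weighted performance difference lemma.** For any `λ ∈ [0,1)` and baseline value
function `f` vanishing at the horizon,
`V^π(d_0) − f(d_0) = (1−λ)·T·E_{s∼d^π}[A^{f,π}_λ(s,π)] + λ·E_{s∼d_0}[A^{f,π}_λ(s,π)]`,
where `A^{f,π}_λ = (1−λ)·Σ_{i≥0} λ^i A^{f,π}_{(i)}`. -/
theorem lambda_weighted_performance_difference_lemma
    {S A : Type} [Fintype S] [DecidableEq S] [Fintype A] (M : MDP S A) (T : ℕ)
    (π : S → A → ℝ) (hπ1 : ∀ s, ∑ a, π s a = 1)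
    (d0 : S → ℝ) (f : ℕ → S → ℝ) (hfT : ∀ s, f T s = 0)
    (lam : ℝ) (hlam0 : 0 ≤ lam) (hlam1 : lam < 1) :
    expect d0 (M.val π T) - expect d0 (f 0) =
      (1 - lam) * (T : ℝ) * ((T : ℝ)⁻¹ * ∑ t ∈ Finset.range T,
          expect (M.stateDist π d0 t)
            (fun s => (1 - lam) * ∑' i : ℕ, lam ^ i * M.advI T f π t i s))
        + lam * expect d0 (fun s => (1 - lam) * ∑' i : ℕ, lam ^ i * M.advI T f π 0 i s) := by
  by_cases hT : T = 0
  · subst hT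
    have hzero : ∀ (i : ℕ) (s : S), M.advI 0 f π 0 i s = 0 := by
      intro i s
      rw [MDP.advI, show min (i + 1) (0 - 0) = 0 from rfl]
      simp [MDP.val, MDP.push, expect_delta]
    simp [_root_.expect, MDP.val, hfT, hzero]
  · have hTne : (T : ℝ) ≠ 0 := Nat.cast_ne_zero.mpr hT
    have hEF : ∀ t, expect (M.stateDist π d0 t)
        (fun s => (1 - lam) * ∑' i : ℕ, lam ^ i * M.advI T f π t i s)
        = ∑ j ∈ range (T - t), lam ^ j * aSeq M π d0 f (t + j) :=
      expectF M π d0 f hπ1 T lam hlam0 hlam1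
    have hEF0 : expect d0 (fun s => (1 - lam) * ∑' i : ℕ, lam ^ i * M.advI T f π 0 i s)
        = ∑ j ∈ range T, lam ^ j * aSeq M π d0 f j := by
      have h := hEF 0
      rw [show M.stateDist π d0 0 = d0 from rfl] at h
      rw [h, Nat.sub_zero]
      exact Finset.sum_congr rfl fun j _ => by rw [Nat.zero_add]
    have hLHS : expect d0 (M.val π T) - expect d0 (f 0) = ∑ t ∈ range T, aSeq M π d0 f t := by
      have hv := val_expect M π d0 f hπ1 T 0
      rw [show M.stateDist π d0 0 = d0 from rfl] at hv
      have hfT0 : expect (M.stateDist π d0 (0 + T)) (f (0 + T)) = 0 := by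
        simp [_root_.expect, hfT]
      rw [hv, hfT0, Finset.sum_congr rfl (fun j (_ : j ∈ range T) => by rw [Nat.zero_add])]
      ring
    rw [hLHS, Finset.sum_congr rfl (fun t _ => hEF t), hEF0]
    have hcancel : ∀ X : ℝ, (1 - lam) * (T : ℝ) * ((T : ℝ)⁻¹ * X) = (1 - lam) * X := by
      intro X; field_simp
    rw [hcancel]
    exact (alg_outer lam (ne_of_lt hlam1) (aSeq M π d0 f) T).symm
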